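/- arXiv:2410.06903 — 4 statements merged into one kernel-verified Lean document; each statement's English description precedes it below -/
import Mathlib

section
/- Let n ∈ ℕ and ω ≥ (n+1)π. Then the Chebyshev error satisfies E^c(n,ω) = 1, and this value is attained by the zero rational function r ≡ 0. -/
open Set

/-- Uniform error of the rational function `p/q` (evaluated on the imaginary
interval `i[-1,1]`) as an approximation to `exp(iωx)`, `x ∈ [-1,1]`. -/
noncomputable def ratErr (ω : ℝ) (p q : Polynomial ℂ) : ℝ :=
  ⨆ x : Set.Icc (-1:ℝ) 1,
    ‖p.eval (Complex.I * ((x : ℝ) : ℂ)) / q.eval (Complex.I * ((x : ℝ) : ℂ)) -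
      Complex.exp (Complex.I * (ω : ℂ) * ((x : ℝ) : ℂ))‖

/-- Error of rational Chebyshev approximation of degree `n` to `exp(iωx)` on `x ∈ [-1,1]`. -/
noncomputable def chebErr (n : ℕ) (ω : ℝ) : ℝ :=
  sInf { E : ℝ | ∃ p q : Polynomial ℂ, p.natDegree ≤ n ∧ q.natDegree ≤ n ∧
    (∀ x : ℝ, x ∈ Set.Icc (-1:ℝ) 1 → q.eval (Complex.I * (x : ℂ)) ≠ 0) ∧
    E = ratErr ω p q }

/-- Error of unitary best approximation of degree `n` to `exp(iωx)` on `x ∈ [-1,1]`. -/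
noncomputable def unitErr (n : ℕ) (ω : ℝ) : ℝ :=
  sInf { E : ℝ | ∃ p q : Polynomial ℂ, p.natDegree ≤ n ∧ q.natDegree ≤ n ∧
    (∀ x : ℝ, q.eval (Complex.I * (x : ℂ)) ≠ 0 ∧
      ‖p.eval (Complex.I * (x : ℂ)) / q.eval (Complex.I * (x : ℂ))‖ = 1) ∧
    E = ratErr ω p q }

/-!
Suppose `‖p/q - exp(iω·)‖ < 1` on `i[-1,1]`. At the `2n + 3` points `t_k = (k - n - 1)π/ω`
of `[-1,1]` the target `exp(iωt_k) = ±1` alternates in sign, and being within distance `1` of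
`±1` forces `Re (p(it_k) · conj q(it_k))` to have the same sign. This real function of `x` is
a polynomial of degree `≤ 2n` in `x`, yet it changes sign `2n + 2` times, so it vanishes
identically: a contradiction. The zero function attains the error `1`.
-/

open Polynomial ComplexConjugate

namespace Complex

theorem re_mul_conj_pos_of_norm_sub_lt {r u : ℂ} (h : ‖r - u‖ < ‖u‖) : 0 < (r * conj u).re := by
  have h2 : normSq (r - u) < normSq u := by
    simpa only [← Complex.sq_norm] using pow_lt_pow_left₀ h (norm_nonneg _) two_ne_zero
  rw [normSq_sub] at h2
  linarith [normSq_nonneg r]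

theorem re_mul_conj_mul_conj_pos_of_norm_div_sub_lt {a b u : ℂ} (hb : b ≠ 0)
    (h : ‖a / b - u‖ < ‖u‖) : 0 < (a * conj b * conj u).re := by
  have hab : a * conj b * conj u = a / b * conj u * (normSq b : ℂ) := by
    rw [← mul_conj]; field_simp
  rw [hab, re_mul_ofReal]
  exact mul_pos (re_mul_conj_pos_of_norm_sub_lt h) (normSq_pos.mpr hb)

end Complex

theorem exists_mem_Ioo_eq_zero_of_mul_neg {f : ℝ → ℝ} {a b : ℝ} (hab : a ≤ b)
    (hf : ContinuousOn f (Icc a b)) (h : f a * f b < 0) : ∃ c ∈ Ioo a b, f c = 0 := by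
  rcases mul_neg_iff.mp h with ⟨ha, hb⟩ | ⟨ha, hb⟩
  · exact intermediate_value_Ioo' hab hf ⟨hb, ha⟩
  · exact intermediate_value_Ioo hab hf ⟨ha, hb⟩

theorem exists_strictMono_zeros_of_mul_neg {f : ℝ → ℝ} (hf : Continuous f) {t : ℕ → ℝ}
    (ht : StrictMono t) {N : ℕ} (hsign : ∀ k < N, f (t k) * f (t (k + 1)) < 0) :
    ∃ y : Fin N → ℝ, StrictMono y ∧ ∀ i, f (y i) = 0 := by
  have hzero : ∀ k < N, ∃ c ∈ Ioo (t k) (t (k + 1)), f c = 0 := fun k hk =>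
    exists_mem_Ioo_eq_zero_of_mul_neg (ht k.lt_succ_self).le hf.continuousOn (hsign k hk)
  choose y hy hy0 using hzero
  refine ⟨fun i => y i i.2, fun i j hij => ?_, fun i => hy0 i i.2⟩
  calc y i i.2 < t (i + 1) := (hy i i.2).2
    _ ≤ t j := ht.monotone (Nat.succ_le_of_lt hij)
    _ < y j j.2 := (hy j j.2).1

theorem exists_natDegree_le_eval_ofReal_eq_two_mul_re (p q : ℂ[X]) :
    ∃ H : ℂ[X], H.natDegree ≤ p.natDegree + q.natDegree ∧ ∀ x : ℝ,
      H.eval (x : ℂ) = 2 * (p.eval (Complex.I * x) * conj (q.eval (Complex.I * x))).re := by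
  set A := p.comp (C Complex.I * X)
  set B := (q.map (starRingEnd ℂ)).comp (C (-Complex.I) * X)
  have hAB : (A * B).natDegree ≤ p.natDegree + q.natDegree := by
    refine natDegree_mul_le.trans (add_le_add ?_ ?_) <;>
      simp [A, B, natDegree_comp, natDegree_map_eq_of_injective (starRingEnd ℂ).injective]
  refine ⟨A * B + (A * B).map (starRingEnd ℂ), ?_, fun x => ?_⟩
  · refine (natDegree_add_le _ _).trans (max_le hAB ?_)
    rwa [natDegree_map_eq_of_injective (starRingEnd ℂ).injective]
  · have hx : conj (x : ℂ) = x := Complex.conj_ofReal x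
    have hB : B.eval (x : ℂ) = conj (q.eval (Complex.I * x)) := by
      have : -Complex.I * x = conj (Complex.I * x) := by simp
      rw [eval_comp, eval_mul, eval_C, eval_X, this, eval_map_apply]
    have hAB_eval : (A * B).eval (x : ℂ) =
        p.eval (Complex.I * x) * conj (q.eval (Complex.I * x)) := by
      rw [eval_mul, hB]; simp [A]
    rw [eval_add, ← hx, eval_map_apply, hx, hAB_eval, Complex.add_conj]
    push_cast; ring

noncomputable def alternationPoint (n : ℕ) (ω : ℝ) (k : ℕ) : ℝ :=
  ((k : ℝ) - (n + 1)) * Real.pi / ω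

theorem alternationPoint_strictMono {n : ℕ} {ω : ℝ} (hω : 0 < ω) :
    StrictMono (alternationPoint n ω) :=
  strictMono_nat_of_lt_succ fun k => by
    unfold alternationPoint
    exact div_lt_div_of_pos_right (mul_lt_mul_of_pos_right (by push_cast; linarith)
      Real.pi_pos) hω

theorem alternationPoint_mem_Icc {n : ℕ} {ω : ℝ} (hω : ((n : ℝ) + 1) * Real.pi ≤ ω) {k : ℕ}
    (hk : k ≤ 2 * n + 2) : alternationPoint n ω k ∈ Icc (-1 : ℝ) 1 := by
  have hω0 : 0 < ω := lt_of_lt_of_le (by positivity) hω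
  have hk' : (k : ℝ) ≤ 2 * n + 2 := by exact_mod_cast hk
  have hπ := Real.pi_pos
  unfold alternationPoint
  constructor
  · rw [le_div_iff₀ hω0]; nlinarith [(k.cast_nonneg : (0 : ℝ) ≤ k)]
  · rw [div_le_one hω0]; nlinarith

theorem exp_alternationPoint {n : ℕ} {ω : ℝ} (hω : ω ≠ 0) (k : ℕ) :
    Complex.exp (Complex.I * ω * (alternationPoint n ω k : ℂ)) = (-1) ^ (k + n + 1) := by
  have harg : Complex.I * ω * (alternationPoint n ω k : ℂ) =
      ((k + n + 1 : ℕ) : ℤ) * (Real.pi * Complex.I) -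
        ((2 * (n + 1) : ℕ) : ℤ) * (Real.pi * Complex.I) := by
    have hωC : (ω : ℂ) ≠ 0 := by exact_mod_cast hω
    unfold alternationPoint
    push_cast
    field_simp
    ring
  rw [harg, Complex.exp_sub, Complex.exp_int_mul, Complex.exp_int_mul, Complex.exp_pi_mul_I,
    zpow_natCast, zpow_natCast, pow_mul]
  norm_num

theorem le_ratErr (ω : ℝ) (p : ℂ[X]) {q : ℂ[X]}
    (hq : ∀ x : ℝ, x ∈ Icc (-1 : ℝ) 1 → q.eval (Complex.I * x) ≠ 0) {x : ℝ}
    (hx : x ∈ Icc (-1 : ℝ) 1) :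
    ‖p.eval (Complex.I * x) / q.eval (Complex.I * x) - Complex.exp (Complex.I * ω * x)‖ ≤
      ratErr ω p q := by
  have hcont : Continuous fun x : Icc (-1 : ℝ) 1 =>
      ‖p.eval (Complex.I * (x : ℝ)) / q.eval (Complex.I * (x : ℝ)) -
        Complex.exp (Complex.I * ω * (x : ℝ))‖ := by
    have hI : Continuous fun x : Icc (-1 : ℝ) 1 => Complex.I * (x : ℝ) := by fun_prop
    exact (((p.continuous.comp hI).div (q.continuous.comp hI) fun x => hq x x.2).sub
      (by fun_prop)).norm
  exact le_ciSup (isCompact_range hcont).bddAbove (⟨x, hx⟩ : Icc (-1 : ℝ) 1)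

theorem one_le_ratErr {n : ℕ} {ω : ℝ} (hω : ((n : ℝ) + 1) * Real.pi ≤ ω) {p q : ℂ[X]}
    (hp : p.natDegree ≤ n) (hq : q.natDegree ≤ n)
    (hq0 : ∀ x : ℝ, x ∈ Icc (-1 : ℝ) 1 → q.eval (Complex.I * x) ≠ 0) :
    1 ≤ ratErr ω p q := by
  by_contra! hlt
  have hω0 : 0 < ω := lt_of_lt_of_le (by positivity) hω
  set t := alternationPoint n ω
  set f : ℝ → ℝ := fun x => (p.eval (Complex.I * x) * conj (q.eval (Complex.I * x))).re
  have hsign : ∀ k ≤ 2 * n + 2, 0 < f (t k) * (-1) ^ (k + n + 1) := by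
    intro k hk
    have hu : ‖((-1 : ℂ) ^ (k + n + 1))‖ = 1 := by simp
    have hclose := (le_ratErr ω p hq0 (alternationPoint_mem_Icc hω hk)).trans_lt hlt
    rw [exp_alternationPoint hω0.ne', ← hu] at hclose
    have := Complex.re_mul_conj_mul_conj_pos_of_norm_div_sub_lt
      (hq0 _ (alternationPoint_mem_Icc hω hk)) hclose
    have hconj : conj ((-1 : ℂ) ^ (k + n + 1)) = (((-1 : ℝ) ^ (k + n + 1) : ℝ) : ℂ) := by simp
    rwa [hconj, Complex.re_mul_ofReal] at this
  have hchange : ∀ k < 2 * n + 2, f (t k) * f (t (k + 1)) < 0 := by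
    intro k hk
    have h2 := hsign (k + 1) hk
    rw [show k + 1 + n + 1 = k + n + 1 + 1 by ring, pow_succ] at h2
    have hsq : ((-1 : ℝ) ^ (k + n + 1)) ^ 2 = 1 := by
      rw [← pow_mul]; exact Even.neg_one_pow ⟨k + n + 1, by ring⟩
    nlinarith [mul_pos (hsign k hk.le) h2]
  have hf : Continuous f := by
    have hI : Continuous fun x : ℝ => Complex.I * x := by fun_prop
    exact Complex.continuous_re.comp
      ((p.continuous.comp hI).mul (Complex.continuous_conj.comp (q.continuous.comp hI)))
  obtain ⟨y, hy, hy0⟩ :=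
    exists_strictMono_zeros_of_mul_neg hf (alternationPoint_strictMono hω0) hchange
  obtain ⟨H, hHdeg, hH⟩ := exists_natDegree_le_eval_ofReal_eq_two_mul_re p q
  have hH0 : H = 0 := by
    refine eq_zero_of_natDegree_lt_card_of_eval_eq_zero H
      (Complex.ofReal_injective.comp hy.injective) (fun i => ?_) ?_
    · have h := hy0 i
      simp only [f] at h
      simp [hH, h]
    · simp only [Fintype.card_fin]; omega
  have hf0 : f (t 0) = 0 := by
    have := hH (t 0)
    rw [hH0, eval_zero] at this
    exact_mod_cast (mul_eq_zero.mp this.symm).resolve_left two_ne_zero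
  simpa [hf0] using hsign 0 (Nat.zero_le _)

theorem ratErr_zero_one (ω : ℝ) : ratErr ω 0 1 = 1 := by
  have h : ∀ x : ℝ, ‖Complex.exp (Complex.I * ω * x)‖ = 1 := fun x => by
    rw [mul_comm Complex.I, mul_right_comm, ← Complex.ofReal_mul]
    exact Complex.norm_exp_ofReal_mul_I _
  have : Nonempty (Icc (-1 : ℝ) 1) := ⟨⟨0, by norm_num⟩⟩
  simp only [ratErr, eval_zero, eval_one, zero_div, zero_sub, norm_neg, h, ciSup_const]

/-- for `ω ≥ (n+1)π` the Chebyshev error is `1`, attained by `r ≡ 0`. -/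
theorem chebErr_eq_one_of_large_freq (n : ℕ) (ω : ℝ) (hω : ((n : ℝ) + 1) * Real.pi ≤ ω) :
    chebErr n ω = 1 ∧ ratErr ω 0 1 = 1 := by
  have hleast : IsLeast { E : ℝ | ∃ p q : Polynomial ℂ, p.natDegree ≤ n ∧ q.natDegree ≤ n ∧
      (∀ x : ℝ, x ∈ Set.Icc (-1:ℝ) 1 → q.eval (Complex.I * (x : ℂ)) ≠ 0) ∧
      E = ratErr ω p q } 1 := by
    refine ⟨⟨0, 1, by simp, by simp, by simp, (ratErr_zero_one ω).symm⟩, ?_⟩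
    rintro E ⟨p, q, hp, hq, hq0, rfl⟩
    exact one_le_ratErr hω hp hq hq0
  exact ⟨hleast.csInf_eq, ratErr_zero_one ω⟩
end

section
/- Let n ∈ ℕ and 0 ≤ ω₁ ≤ ω₂. Then the Chebyshev error is monotone in the frequency: E^c(n,ω₁) ≤ E^c(n,ω₂). -/
/-!
If `p/q` approximates `exp(iω₂x)` on `[-1,1]`, then substituting `x ↦ (ω₁/ω₂) x` gives a
rational function of the same degree approximating `exp(iω₁x)`; its error is a supremum over
the subinterval `(ω₁/ω₂)·[-1,1] ⊆ [-1,1]`, hence no larger.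
-/

open Set

open Polynomial Complex

theorem Polynomial.natDegree_comp_C_mul_X_le {R : Type*} [CommSemiring R] (p : R[X]) (a : R) :
    (p.comp (C a * X)).natDegree ≤ p.natDegree :=
  natDegree_comp_le.trans <| by
    simpa using Nat.mul_le_mul_left p.natDegree (natDegree_C_mul_le a X |>.trans natDegree_X_le)

theorem eval_I_mul_comp_C_mul_X (p : ℂ[X]) (c x : ℝ) :
    (p.comp (C (c : ℂ) * X)).eval (I * x) = p.eval (I * ↑(c * x)) := by
  simp only [eval_comp, eval_mul, eval_C, eval_X]
  push_cast
  ring_nf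

theorem ratErr_nonneg (ω : ℝ) (p q : ℂ[X]) : 0 ≤ ratErr ω p q :=
  Real.iSup_nonneg fun _ => norm_nonneg _

theorem norm_sub_exp_le_ratErr {ω : ℝ} {p q : ℂ[X]}
    (hq : ∀ x ∈ Icc (-1 : ℝ) 1, q.eval (I * x) ≠ 0) {x : ℝ} (hx : x ∈ Icc (-1 : ℝ) 1) :
    ‖p.eval (I * x) / q.eval (I * x) - exp (I * ω * x)‖ ≤ ratErr ω p q := by
  have hI : Continuous fun y : Icc (-1 : ℝ) 1 => I * ((y : ℝ) : ℂ) := by fun_prop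
  have hcont : Continuous fun y : Icc (-1 : ℝ) 1 =>
      ‖p.eval (I * y) / q.eval (I * y) - exp (I * ω * y)‖ :=
    (((p.continuous.comp hI).div (q.continuous.comp hI) fun y => hq y y.2).sub
      (by fun_prop)).norm
  exact le_ciSup (isCompact_range hcont).bddAbove (⟨x, hx⟩ : Icc (-1 : ℝ) 1)

theorem mul_mem_Icc_neg_one_one {c x : ℝ} (hc : |c| ≤ 1) (hx : x ∈ Icc (-1 : ℝ) 1) :
    c * x ∈ Icc (-1 : ℝ) 1 := by
  rw [mem_Icc, ← abs_le, abs_mul]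
  exact mul_le_one₀ hc (abs_nonneg x) (abs_le.2 hx)

theorem ratErr_comp_C_mul_X_le {ω c : ℝ} (hc : |c| ≤ 1) {p q : ℂ[X]}
    (hq : ∀ x ∈ Icc (-1 : ℝ) 1, q.eval (I * x) ≠ 0) :
    ratErr (c * ω) (p.comp (C (c : ℂ) * X)) (q.comp (C (c : ℂ) * X)) ≤ ratErr ω p q := by
  have : Nonempty (Icc (-1 : ℝ) 1) := ⟨⟨0, by norm_num⟩⟩
  refine ciSup_le fun ⟨x, hx⟩ => ?_
  have hexp : I * ↑(c * ω) * ↑x = I * ω * ↑(c * x) := by push_cast; ring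
  simpa only [eval_I_mul_comp_C_mul_X, hexp] using
    norm_sub_exp_le_ratErr (p := p) hq (mul_mem_Icc_neg_one_one hc hx)

theorem chebErr_mul_le (n : ℕ) (ω : ℝ) {c : ℝ} (hc : |c| ≤ 1) :
    chebErr n (c * ω) ≤ chebErr n ω := by
  refine le_csInf ⟨_, 1, 1, by simp, by simp, by simp, rfl⟩ ?_
  rintro _ ⟨p, q, hp, hq, hq0, rfl⟩
  have hbdd : BddBelow {E : ℝ | ∃ p q : ℂ[X], p.natDegree ≤ n ∧ q.natDegree ≤ n ∧
      (∀ x ∈ Icc (-1 : ℝ) 1, q.eval (I * x) ≠ 0) ∧ E = ratErr (c * ω) p q} :=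
    ⟨0, by rintro _ ⟨p, q, -, -, -, rfl⟩; exact ratErr_nonneg _ p q⟩
  have hq0' : ∀ x ∈ Icc (-1 : ℝ) 1, (q.comp (C (c : ℂ) * X)).eval (I * x) ≠ 0 :=
    fun x hx => by
      simpa only [eval_I_mul_comp_C_mul_X] using hq0 _ (mul_mem_Icc_neg_one_one hc hx)
  exact (csInf_le hbdd ⟨_, _, (natDegree_comp_C_mul_X_le p _).trans hp,
    (natDegree_comp_C_mul_X_le q _).trans hq, hq0', rfl⟩).trans
    (ratErr_comp_C_mul_X_le hc hq0)

/-- the Chebyshev error is monotone in the frequency. -/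
theorem chebErr_monotone (n : ℕ) (ω₁ ω₂ : ℝ) (h₁ : 0 ≤ ω₁) (h₂ : ω₁ ≤ ω₂) :
    chebErr n ω₁ ≤ chebErr n ω₂ := by
  obtain rfl | hω₂ := (h₁.trans h₂).eq_or_lt
  · rw [le_antisymm h₂ h₁]
  · have hc : |ω₁ / ω₂| ≤ 1 := by
      rw [abs_of_nonneg (div_nonneg h₁ hω₂.le)]
      exact div_le_one_of_le₀ h₂ hω₂.le
    simpa [div_mul_cancel₀ _ hω₂.ne'] using chebErr_mul_le n ω₂ hc
end

section
/- Let n ∈ ℕ, d ∈ ℕ with d ≤ n, let f : [-1,1] → ℂ be continuous, and let ζ(x) = p(x)/q(x) where p, q are complex polynomials of degree ≤ n − d and q(x) ≠ 0 for all x ∈ [-1,1]. Suppose there exist points −1 ≤ η₁ < x₁ < η₂ < x₂ < ⋯ < x_{2n−d+1} < η_{2n−d+2} ≤ 1 such that: (i) ζ(x_j) = f(x_j) for j = 1,…,2n−d+1; (ii) |ζ(x) − f(x)| ≤ |ζ(η₁) − f(η₁)| for all x ∈ [−1, x₁), |ζ(x) − f(x)| ≤ |ζ(η_j) − f(η_j)|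 for all x ∈ (x_{j−1}, x_j) and j = 2,…,2n−d+1, and |ζ(x) − f(x)| ≤ |ζ(η_{2n−d+2}) − f(η_{2n−d+2})| for all x ∈ (x_{2n−d+1}, 1]. Then for every pair of complex polynomials p̂, q̂ of degree ≤ n with q̂(x) ≠ 0 for all x ∈ [-1,1], one has (1/2)·min_{j=1,…,2n−d+2} |ζ(η_j) − f(η_j)| ≤ sup_{x∈[-1,1]} |p̂(x)/q̂(x) − f(x)|. -/
/-!
Let `μ` be the least error of `ζ` at the points `η j`, and suppose some `ph/qh` has uniform error
`< μ/2`. By the triangle inequality `‖ζ - ph/qh‖ > μ/2` at every `η j`, while at every node `x j`,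
where `ζ = f`, `‖ζ - ph/qh‖ = ‖f - ph/qh‖ < μ/2`. Writing `ζ - ph/qh = A/B` with `A = p qh - q ph`
and `B = q qh` of degree `≤ 2n-d`, the real polynomial `|A|² - (μ/2)² |B|²`, of degree
`≤ 2(2n-d)`, changes sign between any two consecutive points of `η 1 < x 1 < η 2 < ⋯`, which is
`2(2n-d+1)` sign changes: too many.
-/

open Set Polynomial

theorem Polynomial.exists_isRoot_mem_Ioo_of_eval_mul_neg {R : ℝ[X]} {a b : ℝ} (hab : a < b)
    (h : R.eval a * R.eval b < 0) : ∃ r ∈ Ioo a b, R.IsRoot r := by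
  have hzero : (0 : ℝ) ∈ uIcc (R.eval a) (R.eval b) := by
    rcases mul_neg_iff.mp h with ⟨ha, hb⟩ | ⟨ha, hb⟩
    · exact mem_uIcc.mpr (Or.inr ⟨hb.le, ha.le⟩)
    · exact mem_uIcc.mpr (Or.inl ⟨ha.le, hb.le⟩)
  obtain ⟨r, hr, hr0⟩ := intermediate_value_uIcc R.continuous.continuousOn hzero
  rw [uIcc_of_le hab.le] at hr
  refine ⟨r, ⟨hr.1.lt_of_ne ?_, hr.2.lt_of_ne ?_⟩, hr0⟩ <;> rintro rfl <;> simp [hr0] at h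

theorem Polynomial.le_natDegree_of_eval_mul_neg {R : ℝ[X]} {m : ℕ} {z : Fin (m + 1) → ℝ}
    (hz : StrictMono z) (hR : ∀ i : Fin m, R.eval (z i.castSucc) * R.eval (z i.succ) < 0) :
    m ≤ R.natDegree := by
  choose r hr hroot using fun i : Fin m =>
    exists_isRoot_mem_Ioo_of_eval_mul_neg (hz Fin.castSucc_lt_succ) (hR i)
  have hr_mono : StrictMono r := fun i j hij =>
    (hr i).2.trans ((hz.monotone (Fin.succ_le_castSucc_iff.mpr hij)).trans_lt (hr j).1)
  have hsub : Finset.univ.image r ⊆ R.roots.toFinset := fun x hx => by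
    obtain ⟨i, -, rfl⟩ := Finset.mem_image.mp hx
    exact Multiset.mem_toFinset.mpr (mem_roots'.mpr ⟨fun h0 => by simpa [h0] using hR i, hroot i⟩)
  calc m = (Finset.univ.image r).card := by
        rw [Finset.card_image_of_injective _ hr_mono.injective, Finset.card_univ, Fintype.card_fin]
    _ ≤ R.roots.toFinset.card := Finset.card_le_card hsub
    _ ≤ R.natDegree := (Multiset.toFinset_card_le _).trans R.card_roots'

theorem Polynomial.eval_map_conj_ofReal (P : ℂ[X]) (x : ℝ) :
    (P.map (starRingEnd ℂ)).eval (x : ℂ) = starRingEnd ℂ (P.eval (x : ℂ)) := by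
  rw [eval_map, ← eval₂_at_apply, Complex.conj_ofReal]

theorem Polynomial.exists_natDegree_le_eval_eq_normSq (P : ℂ[X]) :
    ∃ R : ℝ[X], R.natDegree ≤ 2 * P.natDegree ∧
      ∀ x : ℝ, R.eval x = Complex.normSq (P.eval (x : ℂ)) := by
  set G := P * P.map (starRingEnd ℂ)
  have hG_conj : G.map (starRingEnd ℂ) = G := by
    rw [Polynomial.map_mul, map_map, show (starRingEnd ℂ).comp (starRingEnd ℂ) = RingHom.id ℂ from
      RingHom.ext starRingEnd_self_apply, map_id, mul_comm]
  have hG_lifts : G ∈ lifts (algebraMap ℝ ℂ) := by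
    refine (lifts_iff_coeff_lifts G).mpr fun k => ⟨(G.coeff k).re, ?_⟩
    have hk : starRingEnd ℂ (G.coeff k) = G.coeff k := by
      conv_rhs => rw [← hG_conj, coeff_map]
    exact Complex.conj_eq_iff_re.mp hk
  obtain ⟨R, hRG, hRdeg⟩ := exists_degree_eq_of_mem_lifts hG_lifts
  refine ⟨R, ?_, fun x => ?_⟩
  · rw [natDegree_eq_of_degree_eq hRdeg]
    exact natDegree_mul_le.trans (by have := natDegree_map_le (f := starRingEnd ℂ) (p := P); omega)
  · apply Complex.ofReal_injective
    rw [← Complex.mul_conj, ← eval_map_conj_ofReal, ← eval_mul, show P * _ = G from rfl, ← hRG,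
      eval_map_algebraMap,
      ← Complex.coe_algebraMap, aeval_algebraMap_apply_eq_algebraMap_eval]

theorem le_two_mul_of_norm_eval_div_alternates {u v : ℂ[X]} {N m : ℕ} (hu : u.natDegree ≤ N)
    (hv : v.natDegree ≤ N) {z : Fin (m + 1) → ℝ} (hz : StrictMono z)
    (hv0 : ∀ k, v.eval (z k : ℂ) ≠ 0) (ρ : ℝ)
    (heven : ∀ k : Fin (m + 1), Even k.val → ρ < ‖u.eval (z k : ℂ) / v.eval (z k : ℂ)‖)
    (hodd : ∀ k : Fin (m + 1), Odd k.val → ‖u.eval (z k : ℂ) / v.eval (z k : ℂ)‖ < ρ) :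
    m ≤ 2 * N := by
  obtain ⟨U, hU, hU_eval⟩ := u.exists_natDegree_le_eval_eq_normSq
  obtain ⟨V, hV, hV_eval⟩ := v.exists_natDegree_le_eval_eq_normSq
  have hR : (U - C (ρ ^ 2) * V).natDegree ≤ 2 * N :=
    (natDegree_sub_le _ _).trans (max_le (by omega) ((natDegree_C_mul_le _ _).trans (by omega)))
  set w := fun k => ‖u.eval (z k : ℂ) / v.eval (z k : ℂ)‖
  have hR_eval : ∀ k, (U - C (ρ ^ 2) * V).eval (z k) =
      (w k - ρ) * ((w k + ρ) * Complex.normSq (v.eval (z k : ℂ))) := fun k => by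
    simp only [w, eval_sub, eval_mul, eval_C, hU_eval, hV_eval, norm_div, ← Complex.sq_norm]
    field_simp [norm_ne_zero_iff.mpr (hv0 k)]
    ring
  refine (le_natDegree_of_eval_mul_neg hz fun i => ?_).trans hR
  have hsign : (w i.castSucc - ρ) * (w i.succ - ρ) < 0 ∧ 0 < ρ := by
    rcases Nat.even_or_odd i.val with hi | hi
    · have hlt := hodd i.succ (by simpa [Nat.odd_add_one] using hi)
      exact ⟨mul_neg_of_pos_of_neg (by linarith [heven i.castSucc (by simpa using hi)])
        (by linarith), (norm_nonneg _).trans_lt hlt⟩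
    · have hlt := hodd i.castSucc (by simpa using hi)
      exact ⟨mul_neg_of_neg_of_pos (by linarith)
        (by linarith [heven i.succ (by simpa [Nat.even_add_one] using hi)]),
        (norm_nonneg _).trans_lt hlt⟩
  have hpos : ∀ k, 0 < (w k + ρ) * Complex.normSq (v.eval (z k : ℂ)) := fun k =>
    mul_pos (add_pos_of_nonneg_of_pos (norm_nonneg _) hsign.2) (Complex.normSq_pos.mpr (hv0 k))
  rw [hR_eval, hR_eval, mul_mul_mul_comm]
  exact mul_neg_of_neg_of_pos hsign.1 (mul_pos (hpos _) (hpos _))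

theorem le_two_mul_of_norm_eval_div_sub_eval_div_alternates {p q ph qh : ℂ[X]} {N M m : ℕ}
    (hp : p.natDegree ≤ N) (hq : q.natDegree ≤ N) (hph : ph.natDegree ≤ M)
    (hqh : qh.natDegree ≤ M) {z : Fin (m + 1) → ℝ} (hz : StrictMono z)
    (hq0 : ∀ k, q.eval (z k : ℂ) ≠ 0) (hqh0 : ∀ k, qh.eval (z k : ℂ) ≠ 0) (ρ : ℝ)
    (heven : ∀ k : Fin (m + 1), Even k.val →
      ρ < ‖p.eval (z k : ℂ) / q.eval (z k : ℂ) - ph.eval (z k : ℂ) / qh.eval (z k : ℂ)‖)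
    (hodd : ∀ k : Fin (m + 1), Odd k.val →
      ‖p.eval (z k : ℂ) / q.eval (z k : ℂ) - ph.eval (z k : ℂ) / qh.eval (z k : ℂ)‖ < ρ) :
    m ≤ 2 * (N + M) := by
  have hdiff : ∀ k, (p * qh - q * ph).eval (z k : ℂ) / (q * qh).eval (z k : ℂ) =
      p.eval (z k : ℂ) / q.eval (z k : ℂ) - ph.eval (z k : ℂ) / qh.eval (z k : ℂ) := fun k => by
    rw [div_sub_div _ _ (hq0 k) (hqh0 k), eval_sub, eval_mul, eval_mul, eval_mul]
  refine le_two_mul_of_norm_eval_div_alternates (u := p * qh - q * ph) (v := q * qh)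
    ((natDegree_sub_le _ _).trans (max_le (natDegree_mul_le.trans (by omega))
      (natDegree_mul_le.trans (by omega)))) (natDegree_mul_le.trans (by omega)) hz
    (fun k => by simpa using mul_ne_zero (hq0 k) (hqh0 k)) ρ ?_ ?_
  · simpa only [hdiff] using heven
  · simpa only [hdiff] using hodd

theorem IsCompact.le_ciSup_of_continuousOn {α : Type*} [TopologicalSpace α] {s : Set α}
    (hs : IsCompact s) {g : α → ℝ} (hg : ContinuousOn g s) {x : α} (hx : x ∈ s) :
    g x ≤ ⨆ y : s, g y :=
  le_ciSup (image_eq_range g s ▸ hs.bddAbove_image hg) ⟨x, hx⟩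

def interleave {α : Type*} (a b : ℕ → α) (k : ℕ) : α :=
  if Even k then a (k / 2 + 1) else b (k / 2 + 1)

theorem interleave_two_mul {α : Type*} (a b : ℕ → α) (j : ℕ) :
    interleave a b (2 * j) = a (j + 1) := by
  simp [interleave]

theorem interleave_two_mul_add_one {α : Type*} (a b : ℕ → α) (j : ℕ) :
    interleave a b (2 * j + 1) = b (j + 1) := by
  simp [interleave, show (2 * j + 1) / 2 = j by omega]

theorem strictMono_interleave {α : Type*} [Preorder α] {a b : ℕ → α} {N : ℕ}
    (h : ∀ j, 1 ≤ j → j ≤ N + 1 → a j < b j ∧ b j < a (j + 1)) :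
    StrictMono fun k : Fin (2 * N + 3) => interleave a b k := by
  refine Fin.strictMono_iff_lt_succ.mpr fun i => ?_
  simp only [Fin.val_castSucc, Fin.val_succ]
  obtain ⟨j, hj | hj⟩ := Nat.even_or_odd' i.val
  · rw [hj, interleave_two_mul, interleave_two_mul_add_one]
    exact (h _ le_add_self (by omega)).1
  · rw [hj, interleave_two_mul_add_one, show 2 * j + 1 + 1 = 2 * (j + 1) by ring,
      interleave_two_mul]
    exact (h _ le_add_self (by omega)).2

theorem interleave_mem_Icc {α : Type*} [Preorder α] {a b : ℕ → α} {N : ℕ}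
    (h : ∀ j, 1 ≤ j → j ≤ N + 1 → a j < b j ∧ b j < a (j + 1)) (k : Fin (2 * N + 3)) :
    interleave a b k ∈ Icc (a 1) (a (N + 2)) :=
  ⟨(interleave_two_mul a b 0).symm.trans_le ((strictMono_interleave h).monotone (Fin.zero_le k)),
    ((strictMono_interleave h).monotone (Fin.le_last k)).trans_eq (interleave_two_mul a b (N + 1))⟩

theorem vallee_poussin_type_lower_bound_general (n d : ℕ) (hd : d ≤ n)
    (f : ℝ → ℂ) (hf : ContinuousOn f (Set.Icc (-1:ℝ) 1))
    (p q : Polynomial ℂ) (hp : p.natDegree ≤ n - d) (hq : q.natDegree ≤ n - d)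
    (hq0 : ∀ x : ℝ, x ∈ Set.Icc (-1:ℝ) 1 → q.eval (x : ℂ) ≠ 0)
    -- the error function of `ζ = p/q`
    (E : ℝ → ℝ)
    (hE : ∀ x : ℝ, E x = ‖p.eval (x : ℂ) / q.eval (x : ℂ) - f x‖)
    -- points `η 1 < x 1 < η 2 < … < x (2n-d+1) < η (2n-d+2)` in `[-1,1]`
    (η xs : ℕ → ℝ)
    (hη1 : -1 ≤ η 1) (hηlast : η (2 * n - d + 2) ≤ 1)
    (horder : ∀ j : ℕ, 1 ≤ j → j ≤ 2 * n - d + 1 → η j < xs j ∧ xs j < η (j + 1))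
    -- (i) interpolation
    (hinterp : ∀ j : ℕ, 1 ≤ j → j ≤ 2 * n - d + 1 →
      p.eval ((xs j : ℝ) : ℂ) / q.eval ((xs j : ℝ) : ℂ) = f (xs j)) :
    ∀ ph qh : Polynomial ℂ, ph.natDegree ≤ n → qh.natDegree ≤ n →
      (∀ x : ℝ, x ∈ Set.Icc (-1:ℝ) 1 → qh.eval (x : ℂ) ≠ 0) →
      (1 / 2) * (⨅ j : Fin (2 * n - d + 2), E (η (j.val + 1))) ≤
        ⨆ x : Set.Icc (-1:ℝ) 1,
          ‖ph.eval ((x : ℝ) : ℂ) / qh.eval ((x : ℝ) : ℂ) - f (x : ℝ)‖ := by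
  intro ph qh hph hqh hqh0
  set μ := ⨅ j : Fin (2 * n - d + 2), E (η (j.val + 1))
  set err := fun x : ℝ => ‖ph.eval (x : ℂ) / qh.eval (x : ℂ) - f x‖
  by_contra! hlt
  have herr : ∀ x ∈ Icc (-1 : ℝ) 1, err x < μ / 2 := fun x hx =>
    (isCompact_Icc.le_ciSup_of_continuousOn (by fun_prop (disch := exact hqh0)) hx).trans_lt
      (by linarith)
  set z := fun k : Fin (2 * (2 * n - d) + 3) => interleave η xs k
  have hz : StrictMono z := strictMono_interleave horder
  have hz_mem : ∀ k, z k ∈ Icc (-1 : ℝ) 1 := fun k =>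
    Icc_subset_Icc hη1 hηlast (interleave_mem_Icc horder k)
  have key := le_two_mul_of_norm_eval_div_sub_eval_div_alternates hp hq hph hqh hz
    (fun k => hq0 _ (hz_mem k)) (fun k => hqh0 _ (hz_mem k)) (μ / 2) ?_ ?_
  · omega
  · rintro k ⟨j, hj⟩
    have hk : z k = η (j + 1) := by simp [z, hj, ← two_mul, interleave_two_mul]
    have hμ : μ ≤ E (η (j + 1)) :=
      ciInf_le (Set.finite_range _).bddBelow (⟨j, by omega⟩ : Fin (2 * n - d + 2))
    have htri := norm_sub_le_norm_sub_add_norm_sub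
      (p.eval (z k : ℂ) / q.eval (z k : ℂ)) (ph.eval (z k : ℂ) / qh.eval (z k : ℂ)) (f (z k))
    linarith [herr _ (hz_mem k), hE (z k), hk ▸ hμ]
  · rintro k ⟨j, hj⟩
    have hk : z k = xs (j + 1) := by simp [z, hj, interleave_two_mul_add_one]
    rw [hk, hinterp _ le_add_self (by omega), norm_sub_rev]
    exact hk ▸ herr _ (hz_mem k)

/-- a de-la-Vallée-Poussin-type lower bound.  If a rational function
`ζ = p/q` of degree `(n-d, n-d)` interpolates a continuous function `f` at
`2n-d+1` nodes `x_1 < … < x_{2n-d+1}`, interleaved with points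
`η_1 < … < η_{2n-d+2}` of locally maximal error, then half the minimal error
`|ζ(η_j) - f(η_j)|` is a lower bound for the uniform error of any rational
approximant of degree `(n, n)` to `f` on `[-1,1]`. -/
theorem vallee_poussin_type_lower_bound (n d : ℕ) (hd : d ≤ n)
    (f : ℝ → ℂ) (hf : ContinuousOn f (Set.Icc (-1:ℝ) 1))
    (p q : Polynomial ℂ) (hp : p.natDegree ≤ n - d) (hq : q.natDegree ≤ n - d)
    (hq0 : ∀ x : ℝ, x ∈ Set.Icc (-1:ℝ) 1 → q.eval (x : ℂ) ≠ 0)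
    -- the error function of `ζ = p/q`
    (E : ℝ → ℝ)
    (hE : ∀ x : ℝ, E x = ‖p.eval (x : ℂ) / q.eval (x : ℂ) - f x‖)
    -- points `η 1 < x 1 < η 2 < … < x (2n-d+1) < η (2n-d+2)` in `[-1,1]`
    (η xs : ℕ → ℝ)
    (hη1 : -1 ≤ η 1) (hηlast : η (2 * n - d + 2) ≤ 1)
    (horder : ∀ j : ℕ, 1 ≤ j → j ≤ 2 * n - d + 1 → η j < xs j ∧ xs j < η (j + 1))
    -- (i) interpolation
    (hinterp : ∀ j : ℕ, 1 ≤ j → j ≤ 2 * n - d + 1 →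
      p.eval ((xs j : ℝ) : ℂ) / q.eval ((xs j : ℝ) : ℂ) = f (xs j))
    -- (ii) the error is locally maximal at the points `η j`
    (hmax_left : ∀ x : ℝ, -1 ≤ x → x < xs 1 → E x ≤ E (η 1))
    (hmax_mid : ∀ j : ℕ, 2 ≤ j → j ≤ 2 * n - d + 1 →
      ∀ x : ℝ, xs (j - 1) < x → x < xs j → E x ≤ E (η j))
    (hmax_right : ∀ x : ℝ, xs (2 * n - d + 1) < x → x ≤ 1 → E x ≤ E (η (2 * n - d + 2))) :
    ∀ ph qh : Polynomial ℂ, ph.natDegree ≤ n → qh.natDegree ≤ n →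
      (∀ x : ℝ, x ∈ Set.Icc (-1:ℝ) 1 → qh.eval (x : ℂ) ≠ 0) →
      (1 / 2) * (⨅ j : Fin (2 * n - d + 2), E (η (j.val + 1))) ≤
        ⨆ x : Set.Icc (-1:ℝ) 1,
          ‖ph.eval ((x : ℝ) : ℂ) / qh.eval ((x : ℝ) : ℂ) - f (x : ℝ)‖ :=
  vallee_poussin_type_lower_bound_general n d hd f hf p q hp hq hq0 E hE η xs hη1 hηlast horder
    hinterp
end

section
/- For ω ∈ (0, π/2], the degree-zero Chebyshev error satisfies E^c(0,ω) = sin ω, and the constant function r ≡ cos ω attains this error: sup_{x∈[-1,1]} |cos ω − exp(iωx)| = sin ω. -/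
/-!
A constant `c` is compared with the arc `{exp (iωx) : x ∈ [-1, 1]}` of the unit circle. Its two
endpoints `e^{±iω}` are `2 sin ω` apart, so by the triangle inequality every `c` is at distance
at least `sin ω` from one of them. Conversely, `|cos ω - e^{iθ}|² = 1 + cos² ω - 2 cos ω cos θ`,
which for `|θ| ≤ ω ≤ π/2` is at most `1 - cos² ω = sin² ω`, so `c = cos ω` is optimal.
-/

open Set

open Complex

lemma norm_sub_le_two_mul_max {E : Type*} [SeminormedAddCommGroup E] (a b c : E) :
    ‖a - b‖ ≤ 2 * max ‖c - a‖ ‖c - b‖ := by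
  calc ‖a - b‖ = ‖(c - b) - (c - a)‖ := by rw [sub_sub_sub_cancel_left]
    _ ≤ ‖c - b‖ + ‖c - a‖ := norm_sub_le _ _
    _ ≤ 2 * max ‖c - a‖ ‖c - b‖ := by
      linarith [le_max_left ‖c - a‖ ‖c - b‖, le_max_right ‖c - a‖ ‖c - b‖]

lemma norm_exp_mul_I_sub_exp_neg_mul_I (θ : ℝ) :
    ‖exp (θ * I) - exp (-θ * I)‖ = 2 * |Real.sin θ| := by
  have h : exp (θ * I) - exp (-θ * I) = ((2 * Real.sin θ : ℝ) : ℂ) * I := by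
    rw [exp_mul_I, exp_mul_I, cos_neg, sin_neg, ofReal_mul, ofReal_sin]
    push_cast
    ring
  rw [h, norm_mul, norm_I, mul_one, norm_real, Real.norm_eq_abs, abs_mul, abs_two]

lemma norm_ofReal_sub_exp_mul_I_sq (a θ : ℝ) :
    ‖(a : ℂ) - exp (θ * I)‖ ^ 2 = 1 + a ^ 2 - 2 * a * Real.cos θ := by
  have h : (a : ℂ) - exp (θ * I) = ((a - Real.cos θ : ℝ) : ℂ) + ((-Real.sin θ : ℝ) : ℂ) * I := by
    rw [exp_mul_I, ← ofReal_cos, ← ofReal_sin]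
    push_cast
    ring
  rw [h, Complex.sq_norm, normSq_add_mul_I]
  nlinarith [Real.sin_sq_add_cos_sq θ]

lemma norm_cos_sub_exp_mul_I_le_sin {ω θ : ℝ} (hω : ω ≤ Real.pi / 2) (hθ : |θ| ≤ ω) :
    ‖(Real.cos ω : ℂ) - exp (θ * I)‖ ≤ Real.sin ω := by
  have hω0 : 0 ≤ ω := (abs_nonneg θ).trans hθ
  have hcos : 0 ≤ Real.cos ω := Real.cos_nonneg_of_mem_Icc ⟨by linarith [Real.pi_pos], hω⟩
  have hsin : 0 ≤ Real.sin ω := Real.sin_nonneg_of_nonneg_of_le_pi hω0 (by linarith [Real.pi_pos])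
  have hcos_le : Real.cos ω ≤ Real.cos θ := by
    rw [← Real.cos_abs θ]
    exact Real.cos_le_cos_of_nonneg_of_le_pi (abs_nonneg θ) (by linarith [Real.pi_pos]) hθ
  refine (pow_le_pow_iff_left₀ (norm_nonneg _) hsin two_ne_zero).mp ?_
  rw [norm_ofReal_sub_exp_mul_I_sq]
  nlinarith [Real.sin_sq_add_cos_sq ω, mul_le_mul_of_nonneg_left hcos_le hcos]

noncomputable def constErr (ω : ℝ) (c : ℂ) : ℝ :=
  ⨆ x : Set.Icc (-1 : ℝ) 1, ‖c - exp ((ω * x : ℝ) * I)‖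

lemma bddAbove_range_norm_sub_exp (ω : ℝ) (c : ℂ) :
    BddAbove (Set.range fun x : Set.Icc (-1 : ℝ) 1 => ‖c - exp ((ω * x : ℝ) * I)‖) := by
  refine ⟨‖c‖ + 1, ?_⟩
  rintro _ ⟨x, rfl⟩
  simpa only [norm_exp_ofReal_mul_I] using norm_sub_le c (exp ((ω * x : ℝ) * I))

lemma abs_sin_le_constErr (ω : ℝ) (c : ℂ) : |Real.sin ω| ≤ constErr ω c := by
  have hle (x : Set.Icc (-1 : ℝ) 1) : ‖c - exp ((ω * x : ℝ) * I)‖ ≤ constErr ω c :=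
    le_ciSup (bddAbove_range_norm_sub_exp ω c) x
  have h₁ := hle ⟨1, by norm_num⟩
  have h₂ := hle ⟨-1, by norm_num⟩
  simp only [mul_one, mul_neg, ofReal_neg, neg_mul] at h₁ h₂
  have := norm_sub_le_two_mul_max (exp (ω * I)) (exp (-ω * I)) c
  rw [norm_exp_mul_I_sub_exp_neg_mul_I, neg_mul] at this
  linarith [max_le h₁ h₂]

lemma constErr_cos {ω : ℝ} (hω0 : 0 ≤ ω) (hω1 : ω ≤ Real.pi / 2) :
    constErr ω (Real.cos ω) = Real.sin ω := by
  have : Nonempty (Set.Icc (-1 : ℝ) 1) := ⟨⟨0, by norm_num⟩⟩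
  refine le_antisymm (ciSup_le fun x => norm_cos_sub_exp_mul_I_le_sin hω1 ?_)
    ((le_abs_self _).trans (abs_sin_le_constErr ω _))
  rw [abs_mul, abs_of_nonneg hω0]
  exact mul_le_of_le_one_right hω0 (abs_le.mpr x.2)

lemma ratErr_of_natDegree_le_zero (ω : ℝ) {p q : Polynomial ℂ} (hp : p.natDegree ≤ 0)
    (hq : q.natDegree ≤ 0) : ratErr ω p q = constErr ω (p.coeff 0 / q.coeff 0) := by
  refine iSup_congr fun x => ?_
  rw [Polynomial.eq_C_of_natDegree_le_zero hp, Polynomial.eq_C_of_natDegree_le_zero hq]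
  simp only [Polynomial.eval_C, Polynomial.coeff_C_zero]
  congr 3
  push_cast
  ring

/-- for `ω ∈ (0, π/2]`, the degree-zero Chebyshev error is `sin ω`,
attained by the constant function `r ≡ cos ω`. -/
theorem chebErr_degree_zero_small_freq (ω : ℝ) (hω0 : 0 < ω) (hω1 : ω ≤ Real.pi / 2) :
    chebErr 0 ω = Real.sin ω ∧
      ratErr ω (Polynomial.C ((Real.cos ω : ℝ) : ℂ)) 1 = Real.sin ω := by
  have hcos : ratErr ω (Polynomial.C ((Real.cos ω : ℝ) : ℂ)) 1 = Real.sin ω := by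
    rw [ratErr_of_natDegree_le_zero ω (Polynomial.natDegree_C _).le Polynomial.natDegree_one.le,
      Polynomial.coeff_C_zero, Polynomial.coeff_one_zero, div_one, constErr_cos hω0.le hω1]
  refine ⟨IsLeast.csInf_eq ⟨⟨_, 1, (Polynomial.natDegree_C _).le, Polynomial.natDegree_one.le,
    by simp, hcos.symm⟩, ?_⟩, hcos⟩
  rintro _ ⟨p, q, hp, hq, -, rfl⟩
  rw [ratErr_of_natDegree_le_zero ω hp hq]
  exact (le_abs_self _).trans (abs_sin_le_constErr ω _)
end
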